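/- arXiv:2601.03982 — 12 statements merged into one kernel-verified Lean document; each statement's English description precedes it below -/
import Mathlib

section
/- Let F_q be a finite field of characteristic p, let r, s be positive integers with s ≤ p, let α_1,…,α_r be distinct elements of F_q, and let y = (y_{i,j}) be an s×r matrix over F_q. Then there exists a unique polynomial H ∈ F_q[X] of degree at most rs−1 such that ∂^(j−1)H(α_i) = y_{j,i} for all 1 ≤ i ≤ r and 1 ≤ j ≤ s. -/
/-!
The Hasse derivatives `∂^(k) f (a)` are the Taylor coefficients of `f` at `a`, so they vanish for
`k < s` exactly when `(X - a)^s ∣ f`. Hence a polynomial of degree `< r s` with vanishing Hermite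
data is divisible by `∏ (X - α_i)^s`, of degree `r s`, and is zero. The Hermite data map on
polynomials of degree `< r s` is thus an injective linear map between spaces of dimension `r s`,
hence bijective.
-/

open Polynomial

namespace Polynomial

theorem X_sub_C_pow_dvd_iff_hasseDeriv_eval_eq_zero {R : Type*} [CommRing R] {f : R[X]} {a : R}
    {n : ℕ} : (X - C a) ^ n ∣ f ↔ ∀ k < n, (hasseDeriv k f).eval a = 0 := by
  simp only [X_sub_C_pow_dvd_iff, ← taylor_apply, X_pow_dvd_iff, taylor_coeff]

section Hermite

variable {F ι : Type*} [Field F] {α : ι → F} {s : ℕ}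

noncomputable def hermiteEval (α : ι → F) (s : ℕ) : F[X] →ₗ[F] Matrix (Fin s) ι F :=
  LinearMap.pi fun j : Fin s => LinearMap.pi fun i => (leval (α i)).comp (hasseDeriv j)

theorem eq_zero_of_hermiteEval_eq_zero [Fintype ι] (hα : Function.Injective α) {f : F[X]}
    (hdeg : f.degree < (Fintype.card ι * s : ℕ)) (hf : hermiteEval α s f = 0) : f = 0 := by
  have hdvd : ∏ i, (X - C (α i)) ^ s ∣ f :=
    Fintype.prod_dvd_of_coprime (fun _ _ hij => (pairwise_coprime_X_sub_C hα hij).pow) fun i =>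
      X_sub_C_pow_dvd_iff_hasseDeriv_eval_eq_zero.2 fun k hk => congr_fun₂ hf ⟨k, hk⟩ i
  refine eq_zero_of_dvd_of_degree_lt hdvd (hdeg.trans_eq ?_)
  simp [degree_prod, degree_pow, Finset.sum_const, mul_comm]

theorem hermiteEval_domRestrict_bijective [Fintype ι] (hα : Function.Injective α) :
    Function.Bijective ((hermiteEval α s).domRestrict (degreeLT F (Fintype.card ι * s))) := by
  set L := (hermiteEval α s).domRestrict (degreeLT F (Fintype.card ι * s))
  have hinj : Function.Injective L := by
    rw [← LinearMap.ker_eq_bot, LinearMap.ker_eq_bot']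
    exact fun f hf => Subtype.ext (eq_zero_of_hermiteEval_eq_zero hα (mem_degreeLT.1 f.2) hf)
  have hrank : Module.finrank F (degreeLT F (Fintype.card ι * s)) =
      Module.finrank F (Matrix (Fin s) ι F) := by
    rw [(degreeLTEquiv F _).finrank_eq, Module.finrank_matrix]
    simp [mul_comm]
  have := (degreeLTEquiv F (Fintype.card ι * s)).symm.finiteDimensional
  exact ⟨hinj, (LinearMap.injective_iff_surjective_of_finrank_eq_finrank hrank).1 hinj⟩

end Hermite

end Polynomial

theorem hermite_interpolation_existsUnique_general {F : Type*} [Field F] {r s : ℕ}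
    (α : Fin r → F) (hα : Function.Injective α)
    (y : Matrix (Fin s) (Fin r) F) :
    ∃! H : Polynomial F, H.degree < (r * s : ℕ) ∧
      ∀ (i : Fin r) (j : Fin s),
        (Polynomial.hasseDeriv j.val H).eval (α i) = y j i := by
  have hbij := hermiteEval_domRestrict_bijective (s := s) hα
  rw [Fintype.card_fin] at hbij
  obtain ⟨⟨H, hH⟩, hHy⟩ := hbij.2 y
  refine ⟨H, ⟨mem_degreeLT.1 hH, fun i j => congr_fun₂ hHy j i⟩, fun G ⟨hG, hGy⟩ => ?_⟩
  have hGH : (⟨G, mem_degreeLT.2 hG⟩ : degreeLT F (r * s)) = ⟨H, hH⟩ :=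
    hbij.1 (hHy ▸ Matrix.ext fun j i => hGy i j)
  exact congr_arg Subtype.val hGH

/-- **Hermite interpolation.** Over a finite field `F` of characteristic `p`,
given `r, s > 0` with `s ≤ p`, distinct points `α 1, …, α r` and prescribed values
`y : Matrix (Fin s) (Fin r) F`, there is a unique polynomial `H` of degree at most `r*s - 1`
(i.e. of degree `< r*s`) with `∂^(j-1) H (α i) = y j i` for all `i, j`. -/
theorem hermite_interpolation_existsUnique {F : Type*} [Field F] [Fintype F]
    (p : ℕ) [CharP F p] {r s : ℕ} (hr : 0 < r) (hs : 0 < s) (hsp : s ≤ p)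
    (α : Fin r → F) (hα : Function.Injective α)
    (y : Matrix (Fin s) (Fin r) F) :
    ∃! H : Polynomial F, H.degree < (r * s : ℕ) ∧
      ∀ (i : Fin r) (j : Fin s),
        (Polynomial.hasseDeriv j.val H).eval (α i) = y j i :=
  hermite_interpolation_existsUnique_general α hα y
end

section
/- Let F_q be a finite field, let α_1,…,α_r be distinct elements of F_q, let V = (v_{i,j}) be an s×r matrix with all entries in F_q nonzero, and let f ∈ F_q[X] be a nonzero polynomial. Then for every j with 1 ≤ j ≤ r, the NRT weight of the j-th column of the matrix EV_{A,V}(f) (whose (i,j) entry is v_{i,j}·∂^(i−1)f(α_j)) equals s − min(s, ν_f(α_j)); in particular it equals s − ν_f(α_j) whenever ν_f(α_j) ≤ s. -/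
open Polynomial

/-!
The `i`-th entry of the `j`-th column of `EVmat α V f` is `V i j` times the `i`-th coefficient of
the Taylor expansion of `f` at `α j`. Since every `V i j` is nonzero, the topmost nonzero entry of
the column sits at the trailing degree of that expansion, which is the root multiplicity of `α j`
in `f`; if it lies below row `s`, the column vanishes.
-/

/-- The NRT weight of a column vector of height `s`: it is `0` for the zero column, and
`s - i + 1` (1-based) when the topmost nonzero entry is in row `i`; with 0-based indexing this
is the maximum of `s - i` over indices `i` with a nonzero entry. -/
def nrtColWt {F : Type*} [Zero F] [DecidableEq F] {s : ℕ} (col : Fin s → F) : ℕ :=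
  (Finset.univ.filter fun i => col i ≠ 0).sup fun i => s - i.val

/-- The NRT weight of an `s × r` matrix: the sum of the NRT weights of its columns. -/
def nrtWt {F : Type*} [Zero F] [DecidableEq F] {s r : ℕ}
    (A : Matrix (Fin s) (Fin r) F) : ℕ :=
  ∑ j, nrtColWt fun i => A i j

/-- The evaluation map of hyperderivative Reed–Solomon codes: the `(i, j)` entry of
`EVmat α V f` is `V i j * ∂^(i) f (α j)` (0-based hyperderivative order). -/
noncomputable def EVmat {F : Type*} [Semiring F] {s r : ℕ} (α : Fin r → F)
    (V : Matrix (Fin s) (Fin r) F) (f : Polynomial F) : Matrix (Fin s) (Fin r) F :=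
  Matrix.of fun i j => V i j * (Polynomial.hasseDeriv i.val f).eval (α j)

theorem nrtColWt_eq_sub_min {F : Type*} [Zero F] [DecidableEq F] {s : ℕ} (col : Fin s → F)
    (m : ℕ) (hlt : ∀ i : Fin s, (i : ℕ) < m → col i = 0) (hm : ∀ h : m < s, col ⟨m, h⟩ ≠ 0) :
    nrtColWt col = s - min s m := by
  apply le_antisymm
  · refine Finset.sup_le fun i hi => ?_
    have : m ≤ i := not_lt.1 fun h => (Finset.mem_filter.1 hi).2 (hlt i h)
    omega
  · rcases lt_or_ge m s with h | h
    · have hmem : (⟨m, h⟩ : Fin s) ∈ Finset.univ.filter fun i => col i ≠ 0 :=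
        Finset.mem_filter.2 ⟨Finset.mem_univ _, hm h⟩
      rw [min_eq_right h.le]
      exact Finset.le_sup (f := fun i : Fin s => s - i.val) hmem
    · simp [min_eq_left h]

theorem nrtColWt_mul_coeff {F : Type*} [Semiring F] [NoZeroDivisors F] [DecidableEq F] {s : ℕ}
    (c : Fin s → F) (hc : ∀ i, c i ≠ 0) {p : F[X]} (hp : p ≠ 0) :
    (nrtColWt fun i => c i * p.coeff i) = s - min s p.natTrailingDegree :=
  nrtColWt_eq_sub_min _ _
    (fun i hi => by rw [coeff_eq_zero_of_lt_natTrailingDegree hi, mul_zero])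
    (fun _ => mul_ne_zero (hc _) (coeff_natTrailingDegree_ne_zero.2 hp))

theorem EVmat_apply_eq_mul_taylor_coeff {F : Type*} [Semiring F] {s r : ℕ} (α : Fin r → F)
    (V : Matrix (Fin s) (Fin r) F) (f : F[X]) (i : Fin s) (j : Fin r) :
    EVmat α V f i j = V i j * (taylor (α j) f).coeff i := by
  rw [taylor_coeff, EVmat, Matrix.of_apply]

theorem rootMultiplicity_eq_natTrailingDegree_taylor {R : Type*} [CommRing R] (a : R) (f : R[X]) :
    rootMultiplicity a f = (taylor a f).natTrailingDegree := by
  rw [rootMultiplicity_eq_natTrailingDegree, taylor_apply]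

theorem nrtColWt_EVmat_general {F : Type*} [Field F] [DecidableEq F] {s r : ℕ}
    (α : Fin r → F)
    (V : Matrix (Fin s) (Fin r) F) (hV : ∀ i j, V i j ≠ 0)
    (f : Polynomial F) (hf : f ≠ 0) :
    ∀ j : Fin r,
      (nrtColWt fun i => EVmat α V f i j) = s - min s (rootMultiplicity (α j) f) ∧
      (rootMultiplicity (α j) f ≤ s →
        (nrtColWt fun i => EVmat α V f i j) = s - rootMultiplicity (α j) f) := by
  intro j
  have hcol : (nrtColWt fun i => EVmat α V f i j) = s - min s (rootMultiplicity (α j) f) := by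
    simp only [EVmat_apply_eq_mul_taylor_coeff, rootMultiplicity_eq_natTrailingDegree_taylor]
    exact nrtColWt_mul_coeff _ (hV · j) ((taylor_eq_zero (α j) f).not.2 hf)
  exact ⟨hcol, fun h => by rw [hcol, min_eq_right h]⟩

/-- For distinct evaluation points, a multiplier matrix with nonzero entries
and a nonzero polynomial `f`, the NRT weight of the `j`-th column of `EVmat α V f` equals
`s - min s (ν_f (α j))`; in particular it equals `s - ν_f (α j)` when `ν_f (α j) ≤ s`. -/
theorem nrtColWt_EVmat {F : Type*} [Field F] [Fintype F] [DecidableEq F] {s r : ℕ}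
    (α : Fin r → F) (hα : Function.Injective α)
    (V : Matrix (Fin s) (Fin r) F) (hV : ∀ i j, V i j ≠ 0)
    (f : Polynomial F) (hf : f ≠ 0) :
    ∀ j : Fin r,
      (nrtColWt fun i => EVmat α V f i j) = s - min s (rootMultiplicity (α j) f) ∧
      (rootMultiplicity (α j) f ≤ s →
        (nrtColWt fun i => EVmat α V f i j) = s - rootMultiplicity (α j) f) :=
  nrtColWt_EVmat_general α V hV f hf
end

section
/- Let F_q be a finite field, let α_1,…,α_r be distinct elements of F_q, let V = (v_{i,j}) be an s×r matrix with all entries in F_q nonzero, and let f ∈ F_q[X] be a nonzero polynomial. Then the NRT weight of the matrix EV_{A,V}(f) (whose (i,j) entry is v_{i,j}·∂^(i−1)f(α_j)) equals rs − Σ_{j=1}^{r} min(s, ν_f(α_j)). -/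
open Polynomial

lemma colWt_aux {F : Type*} [Field F] [DecidableEq F] {s : ℕ} (a : F)
    (v : Fin s → F) (hv : ∀ i, v i ≠ 0) (f : Polynomial F) (hf : f ≠ 0) :
    nrtColWt (fun i => v i * (Polynomial.hasseDeriv i.val f).eval a)
      = s - min s (rootMultiplicity a f) := by
  set m := rootMultiplicity a f with hm
  have hmt : m = (Polynomial.taylor a f).natTrailingDegree := by
    rw [hm, rootMultiplicity_eq_natTrailingDegree, Polynomial.taylor_apply]
  have hz : ∀ i : ℕ, i < m → (Polynomial.hasseDeriv i f).eval a = 0 := by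
    intro i hi
    rw [← Polynomial.taylor_coeff]
    exact Polynomial.coeff_eq_zero_of_lt_natTrailingDegree (hmt ▸ hi)
  have hnz : (Polynomial.hasseDeriv m f).eval a ≠ 0 := by
    rw [← Polynomial.taylor_coeff, hmt]
    exact Polynomial.trailingCoeff_nonzero_iff_nonzero.2
      (fun h => hf (Polynomial.taylor_injective a (by simpa using h)))
  have hmem : ∀ i : Fin s,
      (i ∈ Finset.univ.filter fun i : Fin s =>
        v i * (Polynomial.hasseDeriv i.val f).eval a ≠ 0)
      ↔ (Polynomial.hasseDeriv i.val f).eval a ≠ 0 := by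
    intro i
    simp [mul_ne_zero_iff, hv i]
  unfold nrtColWt
  rcases le_or_gt s m with hsm | hms
  · have : (Finset.univ.filter fun i : Fin s =>
        v i * (Polynomial.hasseDeriv i.val f).eval a ≠ 0) = ∅ := by
      ext i
      simp only [Finset.notMem_empty, iff_false]
      intro hmemi
      exact ((hmem i).1 hmemi) (hz i.val (lt_of_lt_of_le i.isLt hsm))
    rw [this]
    simp [min_eq_left hsm]
  · rw [min_eq_right hms.le]
    apply le_antisymm
    · apply Finset.sup_le
      intro i hi
      have : m ≤ i.val := by
        by_contra h
        exact ((hmem i).1 hi) (hz i.val (lt_of_not_ge h))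
      omega
    · exact Finset.le_sup (f := fun i : Fin s => s - i.val) ((hmem ⟨m, hms⟩).2 hnz)

/-- For distinct evaluation points, a multiplier matrix with nonzero entries
and a nonzero polynomial `f`, the NRT weight of `EVmat α V f` equals
`r*s - ∑_j min s (ν_f (α j))`. -/
theorem nrtWt_EVmat {F : Type*} [Field F] [Fintype F] [DecidableEq F] {s r : ℕ}
    (α : Fin r → F) (hα : Function.Injective α)
    (V : Matrix (Fin s) (Fin r) F) (hV : ∀ i j, V i j ≠ 0)
    (f : Polynomial F) (hf : f ≠ 0) :
    nrtWt (EVmat α V f) = r * s - ∑ j, min s (rootMultiplicity (α j) f) := by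
  have hcol : ∀ j, nrtColWt (fun i => EVmat α V f i j)
      = s - min s (rootMultiplicity (α j) f) := by
    intro j
    exact colWt_aux (α j) (fun i => V i j) (fun i => hV i j) f hf
  unfold nrtWt
  simp_rw [hcol]
  have h1 : (∑ j : Fin r, (s - min s (rootMultiplicity (α j) f)))
      + ∑ j : Fin r, min s (rootMultiplicity (α j) f) = r * s := by
    rw [← Finset.sum_add_distrib]
    have : ∀ j : Fin r, s - min s (rootMultiplicity (α j) f)
        + min s (rootMultiplicity (α j) f) = s := fun j =>
      Nat.sub_add_cancel (min_le_left _ _)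
    simp [this, mul_comm]
  omega
end

section
/- Let F_q be a finite field, let α_1,…,α_r be distinct elements of F_q, let V be an s×r matrix with all entries in F_q nonzero, and let 1 ≤ t ≤ rs. Then every nonzero polynomial f ∈ F_q[X] of degree at most t−1 satisfies ω_N(EV_{A,V}(f)) ≥ rs − t + 1, where EV_{A,V}(f) is the s×r matrix whose (i,j) entry is v_{i,j}·∂^(i−1)f(α_j). -/
open Polynomial

/-- If all Hasse derivatives of order `< m` of `f` vanish at `a`, then
`m ≤ rootMultiplicity a f`. -/
lemma le_rootMultiplicity_of_hasseDeriv {F : Type*} [Field F] {f : Polynomial F} (hf : f ≠ 0)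
    (a : F) (m : ℕ) (h : ∀ k < m, (Polynomial.hasseDeriv k f).eval a = 0) :
    m ≤ f.rootMultiplicity a := by
  rw [Polynomial.le_rootMultiplicity_iff hf, Polynomial.X_sub_C_pow_dvd_iff,
    Polynomial.X_pow_dvd_iff]
  intro d hd
  rw [← Polynomial.taylor_apply, Polynomial.taylor_coeff]
  exact h d hd

/-- For distinct evaluation points, a multiplier matrix with nonzero entries
and `1 ≤ t ≤ r*s`, every nonzero polynomial `f` of degree at most `t - 1` satisfies
`ω_N (EVmat α V f) ≥ r*s - t + 1`. -/
theorem nrtWt_EVmat_ge {F : Type*} [Field F] [Fintype F] [DecidableEq F] {s r : ℕ}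
    (α : Fin r → F) (hα : Function.Injective α)
    (V : Matrix (Fin s) (Fin r) F) (hV : ∀ i j, V i j ≠ 0)
    (t : ℕ) (ht1 : 1 ≤ t) (ht2 : t ≤ r * s)
    (f : Polynomial F) (hf : f ≠ 0) (hdeg : f.degree < (t : ℕ)) :
    r * s - t + 1 ≤ nrtWt (EVmat α V f) := by
  classical
  -- For each column j, define m j := s - (column weight); all hasseDeriv of order < m j vanish.
  have hcol : ∀ j : Fin r, s - nrtColWt (fun i => EVmat α V f i j) ≤ f.rootMultiplicity (α j) := by
    intro j
    apply le_rootMultiplicity_of_hasseDeriv hf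
    intro k hk
    by_contra hne
    have hklt : k < s := lt_of_lt_of_le hk (Nat.sub_le _ _)
    have hmem : (⟨k, hklt⟩ : Fin s) ∈ Finset.univ.filter
        (fun i => (fun i => EVmat α V f i j) i ≠ 0) := by
      simp only [Finset.mem_filter, Finset.mem_univ, true_and]
      simp only [EVmat, Matrix.of_apply]
      exact mul_ne_zero (hV _ _) hne
    have hle : s - k ≤ nrtColWt (fun i => EVmat α V f i j) :=
      Finset.le_sup (f := fun i : Fin s => s - i.val) hmem
    omega
  -- column weights are at most s
  have hwle : ∀ j : Fin r, nrtColWt (fun i => EVmat α V f i j) ≤ s := by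
    intro j
    apply Finset.sup_le
    intro i _
    exact Nat.sub_le _ _
  -- sum of root multiplicities is at most natDegree f
  have hdeg' : f.natDegree ≤ t - 1 := by
    have := Polynomial.natDegree_lt_iff_degree_lt (n := t) hf |>.mpr hdeg
    omega
  have hsum : ∑ j : Fin r, f.rootMultiplicity (α j) ≤ f.natDegree := by
    calc ∑ j : Fin r, f.rootMultiplicity (α j)
        = ∑ j : Fin r, f.roots.count (α j) := by
          simp [Polynomial.count_roots]
      _ = ∑ a ∈ Finset.univ.image α, f.roots.count a :=
          by rw [Finset.sum_image (fun x _ y _ h => hα h)]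
      _ ≤ ∑ a ∈ f.roots.toFinset, f.roots.count a := by
          apply Finset.sum_le_sum_of_ne_zero
          intro a _ ha
          rw [Multiset.mem_toFinset, ← Multiset.count_pos]
          omega
      _ = Multiset.card f.roots := f.roots.toFinset_sum_count_eq
      _ ≤ f.natDegree := Polynomial.card_roots' f
  have key : ∑ j : Fin r, (s - nrtColWt (fun i => EVmat α V f i j)) ≤ t - 1 :=
    le_trans (Finset.sum_le_sum fun j _ => hcol j) (le_trans hsum hdeg')
  have hsplit : r * s ≤ nrtWt (EVmat α V f)
      + ∑ j : Fin r, (s - nrtColWt (fun i => EVmat α V f i j)) := by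
    rw [nrtWt, ← Finset.sum_add_distrib]
    have h1 : (r : ℕ) * s = ∑ _j : Fin r, s := by simp [mul_comm]
    rw [h1]
    apply Finset.sum_le_sum
    intro j _
    omega
  omega
end

section
/- Let F_q be a finite field, let α_1,…,α_r be distinct elements of F_q, let V be an s×r matrix with all entries in F_q nonzero, and let 1 ≤ t ≤ rs. Then the minimum NRT distance of the Hyperderivative Reed–Solomon code HRS(A,V,t−1) equals rs − t + 1; that is, every nonzero codeword has NRT weight at least rs − t + 1 and some nonzero codeword has NRT weight exactly rs − t + 1. In particular HRS(A,V,t−1) is an MDS code with respect to the NRT metric. -/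
open Polynomial

section Aux

variable {F : Type*} [Field F] [DecidableEq F]

lemma HRSaux_taylor_eq_X_pow_mul (a : F) (f : F[X]) :
    taylor a f = X ^ (rootMultiplicity a f) *
      taylor a (f /ₘ (X - C a) ^ (rootMultiplicity a f)) := by
  conv_lhs => rw [← pow_mul_divByMonic_rootMultiplicity_eq f a]
  rw [taylor_mul]
  congr 1
  rw [taylor_apply]
  simp

lemma HRSaux_hd_eval_eq_zero_of_lt (a : F) (f : F[X]) {k : ℕ}
    (hk : k < rootMultiplicity a f) : (hasseDeriv k f).eval a = 0 := by
  rw [← taylor_coeff, HRSaux_taylor_eq_X_pow_mul a f, mul_comm, coeff_mul_X_pow']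
  simp [Nat.not_le_of_lt hk]

lemma HRSaux_hd_eval_ne_zero (a : F) {f : F[X]} (hf : f ≠ 0) :
    (hasseDeriv (rootMultiplicity a f) f).eval a ≠ 0 := by
  rw [← taylor_coeff, HRSaux_taylor_eq_X_pow_mul a f, mul_comm, coeff_mul_X_pow']
  simpa using eval_divByMonic_pow_rootMultiplicity_ne_zero a hf

lemma HRSaux_nrtColWt_le {s : ℕ} (col : Fin s → F) (m : ℕ)
    (h : ∀ i : Fin s, i.val < m → col i = 0) : nrtColWt col ≤ s - min m s := by
  apply Finset.sup_le
  intro i hi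
  rw [Finset.mem_filter] at hi
  have : ¬ i.val < m := fun hlt => hi.2 (h i hlt)
  omega

lemma HRSaux_nrtColWt_ge {s : ℕ} {m : ℕ} (hm : m < s) (col : Fin s → F)
    (hc : col ⟨m, hm⟩ ≠ 0) : s - m ≤ nrtColWt col := by
  unfold nrtColWt
  exact Finset.le_sup (f := fun i : Fin s => s - i.val) (b := ⟨m, hm⟩)
    (Finset.mem_filter.2 ⟨Finset.mem_univ _, hc⟩)

lemma HRSaux_sum_count_le (S : Finset F) (mset : Multiset F) :
    ∑ b ∈ S, mset.count b ≤ Multiset.card mset := by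
  have h1 : ∑ b ∈ S, mset.count b = ∑ b ∈ S ∩ mset.toFinset, mset.count b := by
    refine (Finset.sum_subset Finset.inter_subset_left ?_).symm
    intro b hb hb'
    have : b ∉ mset.toFinset := fun hmem =>
      hb' (Finset.mem_inter.2 ⟨hb, hmem⟩)
    simpa [Multiset.count_eq_zero] using fun hmem => this (Multiset.mem_toFinset.2 hmem)
  rw [h1, ← Multiset.toFinset_sum_count_eq mset]
  exact Finset.sum_le_sum_of_subset Finset.inter_subset_right

lemma HRSaux_sum_rootMult_le {r : ℕ} (α : Fin r → F) (hα : Function.Injective α)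
    {f : F[X]} (hf : f ≠ 0) :
    ∑ j : Fin r, rootMultiplicity (α j) f ≤ f.natDegree := by
  have h1 : ∑ j : Fin r, rootMultiplicity (α j) f
      = ∑ b ∈ Finset.univ.image α, f.roots.count b := by
    rw [Finset.sum_image (fun x _ y _ h => hα h)]
    simp [count_roots]
  rw [h1]
  exact le_trans (HRSaux_sum_count_le _ _) (card_roots' f)

lemma HRSaux_sum_min (s : ℕ) : ∀ (r T : ℕ), T ≤ s * r →
    ∑ j : Fin r, min s (T - s * j.val) = T := by
  intro r
  induction r with
  | zero => intro T hT; simp; omega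
  | succ r ih =>
    intro T hT
    have hx : s * (r + 1) = s * r + s := by ring
    rw [Fin.sum_univ_succ]
    have h3 : (∑ j : Fin r, min s (T - s * (Fin.succ j).val))
        = ∑ j : Fin r, min s ((T - s) - s * j.val) := by
      refine Finset.sum_congr rfl fun j _ => ?_
      congr 1
      have hy : s * (Fin.succ j).val = s * j.val + s := by
        rw [Fin.val_succ]; ring
      omega
    rw [h3, ih (T - s) (by omega)]
    simp only [Fin.val_zero, Nat.mul_zero, Nat.sub_zero]
    omega

end Aux

/-- For distinct evaluation points, a multiplier matrix with nonzero entries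
and `1 ≤ t ≤ r*s`, the minimum NRT distance of the hyperderivative Reed–Solomon code
`HRS(A, V, t-1)` (the image of the polynomials of degree `< t` under `EVmat α V`) equals
`r*s - t + 1`: every nonzero codeword has NRT weight at least `r*s - t + 1`, and some nonzero
codeword has NRT weight exactly `r*s - t + 1`.  In particular the code is MDS for the NRT
metric. -/
theorem HRS_minDist_eq {F : Type*} [Field F] [Fintype F] [DecidableEq F] {s r : ℕ}
    (α : Fin r → F) (hα : Function.Injective α)
    (V : Matrix (Fin s) (Fin r) F) (hV : ∀ i j, V i j ≠ 0)
    (t : ℕ) (ht1 : 1 ≤ t) (ht2 : t ≤ r * s) :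
    (∀ c : Matrix (Fin s) (Fin r) F,
        (∃ f : Polynomial F, f.degree < (t : ℕ) ∧ EVmat α V f = c) →
          c ≠ 0 → r * s - t + 1 ≤ nrtWt c) ∧
      (∃ c : Matrix (Fin s) (Fin r) F,
        (∃ f : Polynomial F, f.degree < (t : ℕ) ∧ EVmat α V f = c) ∧
          c ≠ 0 ∧ nrtWt c = r * s - t + 1) := by
  have main1 : ∀ c : Matrix (Fin s) (Fin r) F,
      (∃ f : Polynomial F, f.degree < (t : ℕ) ∧ EVmat α V f = c) →
        c ≠ 0 → r * s - t + 1 ≤ nrtWt c := by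
    rintro c ⟨f, hdeg, rfl⟩ hc
    have hf : f ≠ 0 := by
      rintro rfl
      apply hc
      ext i j
      simp [EVmat]
    set m : Fin r → ℕ := fun j => rootMultiplicity (α j) f with hm
    have hnd : f.natDegree < t := (natDegree_lt_iff_degree_lt hf).2 hdeg
    have hsum : ∑ j, min (m j) s ≤ t - 1 := by
      calc ∑ j, min (m j) s ≤ ∑ j, m j :=
            Finset.sum_le_sum fun j _ => min_le_left _ _
        _ ≤ f.natDegree := HRSaux_sum_rootMult_le α hα hf
        _ ≤ t - 1 := by omega
    have hcol : ∀ j, s - min (m j) s ≤ nrtColWt (fun i => EVmat α V f i j) := by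
      intro j
      by_cases hlt : m j < s
      · have hne : (fun i => EVmat α V f i j) ⟨m j, hlt⟩ ≠ 0 := by
          simp only [EVmat, Matrix.of_apply]
          exact mul_ne_zero (hV _ _) (HRSaux_hd_eval_ne_zero (α j) hf)
        have := HRSaux_nrtColWt_ge (F := F) hlt (fun i => EVmat α V f i j) hne
        omega
      · have : s - min (m j) s = 0 := by omega
        omega
    have h1 : ∑ j, (s - min (m j) s) ≤ nrtWt (EVmat α V f) :=
      Finset.sum_le_sum fun j _ => hcol j
    have h2 : ∑ j, (s - min (m j) s) + ∑ j, min (m j) s = r * s := by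
      rw [← Finset.sum_add_distrib]
      have : ∀ j : Fin r, (s - min (m j) s) + min (m j) s = s := fun j => by omega
      rw [Finset.sum_congr rfl fun j _ => this j]
      simp [Finset.sum_const, mul_comm]
    omega
  refine ⟨main1, ?_⟩
  have hsr : s * r = r * s := mul_comm s r
  set T := t - 1 with hT
  set e : Fin r → ℕ := fun j => min s (T - s * j.val) with he
  set f : F[X] := ∏ j : Fin r, (X - C (α j)) ^ e j with hf
  have hfac : ∀ j : Fin r, (X - C (α j)) ^ e j ≠ 0 :=
    fun j => pow_ne_zero _ (X_sub_C_ne_zero _)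
  have hfne : f ≠ 0 := Finset.prod_ne_zero_iff.2 fun j _ => hfac j
  have hsume : ∑ j : Fin r, e j = T := HRSaux_sum_min s r T (by omega)
  have hnd : f.natDegree = T := by
    rw [hf, natDegree_prod _ _ fun j _ => hfac j]
    simp only [natDegree_pow, natDegree_X_sub_C, mul_one]
    exact hsume
  have hdeg : f.degree < (t : ℕ) := by
    rw [← natDegree_lt_iff_degree_lt hfne]
    omega
  have hmult : ∀ j, e j ≤ rootMultiplicity (α j) f := by
    intro j
    rw [le_rootMultiplicity_iff hfne]
    exact Finset.dvd_prod_of_mem _ (Finset.mem_univ j)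
  have hcne : EVmat α V f ≠ 0 := by
    intro hc0
    have hall : ∀ j, s ≤ rootMultiplicity (α j) f := by
      intro j
      by_contra h
      push_neg at h
      have hz : EVmat α V f ⟨rootMultiplicity (α j) f, h⟩ j = 0 :=
        congrFun (congrFun hc0 _) _
      simp only [EVmat, Matrix.of_apply] at hz
      rcases mul_eq_zero.1 hz with h' | h'
      · exact hV _ _ h'
      · exact HRSaux_hd_eval_ne_zero (α j) hfne h'
    have h1 : ∑ j : Fin r, rootMultiplicity (α j) f ≤ f.natDegree :=
      HRSaux_sum_rootMult_le α hα hfne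
    have h2 : (r * s : ℕ) ≤ ∑ j : Fin r, rootMultiplicity (α j) f := by
      calc (r * s : ℕ) = ∑ _j : Fin r, s := by simp [Finset.sum_const, mul_comm]
        _ ≤ _ := Finset.sum_le_sum fun j _ => hall j
    omega
  refine ⟨EVmat α V f, ⟨f, hdeg, rfl⟩, hcne, le_antisymm ?_ (main1 _ ⟨f, hdeg, rfl⟩ hcne)⟩
  have hcol : ∀ j, nrtColWt (fun i => EVmat α V f i j) ≤ s - e j := by
    intro j
    have h := HRSaux_nrtColWt_le (fun i => EVmat α V f i j) (rootMultiplicity (α j) f) ?_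
    · have := hmult j
      have he2 : e j ≤ s := min_le_left _ _
      omega
    · intro i hi
      simp only [EVmat, Matrix.of_apply]
      rw [HRSaux_hd_eval_eq_zero_of_lt (α j) f hi, mul_zero]
  have h1 : nrtWt (EVmat α V f) ≤ ∑ j, (s - e j) :=
    Finset.sum_le_sum fun j _ => hcol j
  have h2 : ∑ j, (s - e j) + ∑ j, e j = r * s := by
    rw [← Finset.sum_add_distrib]
    have : ∀ j : Fin r, (s - e j) + e j = s := fun j => by
      have : e j ≤ s := min_le_left _ _
      omega
    rw [Finset.sum_congr rfl fun j _ => this j]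
    simp [Finset.sum_const, mul_comm]
  omega
end

section
/- Let F_q be a finite field and let C ⊆ Mat_{s×r}(F_q) be a code with at least two elements whose minimum NRT distance is at least d. Then |C| ≤ q^{rs − d + 1} (the Singleton bound for the NRT metric). -/
open Polynomial

/-!
Deleting the bottom `d - 1` entries of the matrices, spread over the columns so that each
column loses a bottom segment of at most `s` entries, is injective on `C`: two codewords that
agree on the remaining `r * s - (d - 1)` positions differ by a matrix supported on the deleted
bottom segments, whose NRT weight is at most their total size `d - 1`.
-/

open Finset

section Weight

variable {F : Type*} [Zero F] [DecidableEq F] {s r : ℕ}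

theorem nrtColWt_le_of_forall_lt_eq_zero {col : Fin s → F} {k : ℕ}
    (h : ∀ i : Fin s, i.val < k → col i = 0) : nrtColWt col ≤ s - k :=
  Finset.sup_le fun i hi => by
    have : k ≤ i.val := not_lt.1 fun hik => (mem_filter.1 hi).2 (h i hik)
    omega

theorem nrtWt_le_sum_of_forall_add_lt_eq_zero {A : Matrix (Fin s) (Fin r) F} {u : Fin r → ℕ}
    (h : ∀ i j, i.val + u j < s → A i j = 0) : nrtWt A ≤ ∑ j, u j :=
  sum_le_sum fun j _ =>
    (nrtColWt_le_of_forall_lt_eq_zero (k := s - u j) fun i hi => h i j (by omega)).trans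
      (by omega)

theorem nrtWt_le_mul (A : Matrix (Fin s) (Fin r) F) : nrtWt A ≤ r * s := by
  simpa using nrtWt_le_sum_of_forall_add_lt_eq_zero (A := A) (u := fun _ => s) fun _ _ _ => by
    omega

end Weight

theorem exists_forall_le_sum_eq_of_le_mul {r s e : ℕ} (h : e ≤ r * s) :
    ∃ u : Fin r → ℕ, (∀ j, u j ≤ s) ∧ ∑ j, u j = e := by
  induction r generalizing e with
  | zero => exact ⟨Fin.elim0, fun j => j.elim0, by simp_all⟩
  | succ r ih =>
    obtain ⟨u, hus, hsum⟩ := ih (e := e - min e s) (by rw [Nat.succ_mul] at h; omega)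
    refine ⟨Fin.cons (min e s) u, Fin.cases (min_le_right _ _) hus, ?_⟩
    rw [Fin.sum_univ_succ]
    simp only [Fin.cons_zero, Fin.cons_succ, hsum]
    omega

def keptPositions (s : ℕ) {r : ℕ} (u : Fin r → ℕ) : Finset (Fin s × Fin r) :=
  {p | p.1.val + u p.2 < s}

theorem card_keptPositions (s : ℕ) {r : ℕ} (u : Fin r → ℕ) :
    #(keptPositions s u) = ∑ j, (s - u j) := by
  rw [keptPositions, card_filter, Fintype.sum_prod_type_right]
  refine sum_congr rfl fun j _ => ?_
  rw [← card_filter, filter_congr fun i _ => (Nat.lt_sub_iff_add_lt (b := u j)).symm,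
    Fin.card_filter_val_lt]
  omega

theorem card_le_pow_of_lt_nrtWt {F : Type*} [AddGroup F] [Fintype F] [DecidableEq F]
    {s r e : ℕ} (C : Finset (Matrix (Fin s) (Fin r) F)) (he : e ≤ r * s)
    (hC : ∀ A ∈ C, ∀ B ∈ C, A ≠ B → e < nrtWt (A - B)) :
    #C ≤ Fintype.card F ^ (r * s - e) := by
  obtain ⟨u, hus, rfl⟩ := exists_forall_le_sum_eq_of_le_mul he
  set K := keptPositions s u
  have hinj : Set.InjOn (fun (A : Matrix (Fin s) (Fin r) F) (p : K) => A p.1.1 p.1.2) C := by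
    intro A hA B hB hAB
    by_contra hne
    refine (hC A hA B hB hne).not_ge (nrtWt_le_sum_of_forall_add_lt_eq_zero fun i j hij => ?_)
    have := congrFun hAB ⟨(i, j), by simp [K, keptPositions, hij]⟩
    simpa [sub_eq_zero] using this
  calc #C ≤ Fintype.card (K → F) := card_le_card_of_injOn _ (fun _ _ => mem_univ _) hinj
    _ = Fintype.card F ^ (r * s - ∑ j, u j) := by
      rw [Fintype.card_fun, Fintype.card_coe, card_keptPositions,
        sum_tsub_distrib _ fun j _ => hus j]
      simp [mul_comm]

theorem card_matrix_fin (F : Type*) [Fintype F] (s r : ℕ) :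
    Fintype.card (Matrix (Fin s) (Fin r) F) = Fintype.card F ^ (r * s) := by
  rw [Fintype.card_congr Matrix.of.symm]
  simp [← pow_mul, mul_comm]

/-- **Singleton bound for the NRT metric.** If a code
`C ⊆ Mat_{s×r}(F_q)` has at least two elements and minimum NRT distance at least `d`, then
`|C| ≤ q^(r*s - d + 1)`. -/
theorem nrt_singleton_bound {F : Type*} [Field F] [Fintype F] [DecidableEq F] {s r : ℕ}
    (C : Finset (Matrix (Fin s) (Fin r) F)) (hC : 2 ≤ C.card)
    (d : ℕ) (hd : ∀ A ∈ C, ∀ B ∈ C, A ≠ B → d ≤ nrtWt (A - B)) :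
    C.card ≤ Fintype.card F ^ (r * s - d + 1) := by
  obtain ⟨A, hA, B, hB, hAB⟩ := one_lt_card.1 hC
  have hdrs : d ≤ r * s := (hd A hA B hB hAB).trans (nrtWt_le_mul _)
  rcases d with _ | e
  · calc #C ≤ Fintype.card (Matrix (Fin s) (Fin r) F) := card_le_univ C
      _ = Fintype.card F ^ (r * s) := card_matrix_fin F s r
      _ ≤ Fintype.card F ^ (r * s - 0 + 1) := Nat.pow_le_pow_right Fintype.card_pos (by omega)
  · calc #C ≤ Fintype.card F ^ (r * s - e) :=
          card_le_pow_of_lt_nrtWt C (by omega) fun A hA B hB hAB => hd A hA B hB hAB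
      _ = Fintype.card F ^ (r * s - (e + 1) + 1) := by congr 1; omega
end

section
/- Let F be a field, let α ∈ F, let y_1,…,y_s ∈ F, let P, E ∈ F[X], and let m be an integer with 0 ≤ m ≤ s. Suppose (X−α)^{s−m} divides E and y_j = ∂^(j−1)P(α) for all 1 ≤ j ≤ m. Then for every ℓ with 1 ≤ ℓ ≤ s, ∂^(ℓ−1)(E·P)(α) = Σ_{j=1}^{ℓ} y_j · ∂^(ℓ−j)E(α). -/
open Polynomial

lemma hasseDeriv_eval_eq_zero_of_dvd {F : Type*} [CommRing F] {α : F} {n k : ℕ} {E : Polynomial F}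
    (h : (X - Polynomial.C α) ^ n ∣ E) (hk : k < n) : (Polynomial.hasseDeriv k E).eval α = 0 := by
  obtain ⟨Q, rfl⟩ := h
  rw [← taylor_coeff]
  have ht : taylor α ((X - Polynomial.C α) ^ n * Q) = X ^ n * taylor α Q := by
    simp [taylor_apply, mul_comp, pow_comp, sub_comp]
  rw [ht]
  exact (X_pow_dvd_iff.mp (dvd_mul_right _ _)) k hk

/-- Let `α ∈ F`, `y : Fin s → F`, `P, E ∈ F[X]` and `m ≤ s`.  If
`(X - α)^(s - m)` divides `E` and `y j = ∂^(j) P (α)` for all (0-based) `j < m`, then for every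
(0-based) `ℓ < s` we have `∂^(ℓ) (E * P) (α) = ∑_{j ≤ ℓ} y j * ∂^(ℓ - j) E (α)`. -/
theorem hasseDeriv_mul_eval_eq_sum {F : Type*} [Field F] {s : ℕ}
    (α : F) (y : Fin s → F) (P E : Polynomial F) (m : ℕ) (hm : m ≤ s)
    (hE : (X - Polynomial.C α) ^ (s - m) ∣ E)
    (hy : ∀ j : Fin s, j.val < m → y j = (Polynomial.hasseDeriv j.val P).eval α) :
    ∀ ℓ : Fin s,
      (Polynomial.hasseDeriv ℓ.val (E * P)).eval α =
        ∑ j ∈ Finset.Iic ℓ, y j * (Polynomial.hasseDeriv (ℓ.val - j.val) E).eval α := by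
  intro ℓ
  rw [hasseDeriv_mul, eval_finset_sum]
  simp only [eval_mul]
  rw [Finset.Nat.sum_antidiagonal_eq_sum_range_succ
    (fun i j => (hasseDeriv i E).eval α * (hasseDeriv j P).eval α)]
  refine Finset.sum_nbij' (fun k => (⟨ℓ.val - k, by omega⟩ : Fin s))
    (fun j => ℓ.val - j.val) ?_ ?_ ?_ ?_ ?_
  · intro k hk
    simp only [Finset.mem_range] at hk
    simp only [Finset.mem_Iic, Fin.le_def]
    omega
  · intro j hj
    simp only [Finset.mem_Iic, Fin.le_def] at hj
    simp only [Finset.mem_range]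
    omega
  · intro k hk
    simp only [Finset.mem_range] at hk
    show ℓ.val - (ℓ.val - k) = k
    omega
  · intro j hj
    simp only [Finset.mem_Iic, Fin.le_def] at hj
    ext
    simp only
    omega
  · intro k hk
    simp only [Finset.mem_range] at hk
    by_cases hkm : ℓ.val - k < m
    · rw [hy _ hkm]
      simp only
      have : ℓ.val - (ℓ.val - k) = k := by omega
      rw [this, mul_comm]
    · have hz : (hasseDeriv k E).eval α = 0 :=
        hasseDeriv_eval_eq_zero_of_dvd hE (by omega)
      have : ℓ.val - (ℓ.val - k) = k := by omega
      rw [this, hz, zero_mul, mul_zero]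
end

section
/- Let F_q be a finite field, let α_1,…,α_r be distinct elements of F_q, let 1 ≤ t ≤ rs, let P ∈ F_q[X] have degree at most t−1, let y = (y_{j,i}) ∈ Mat_{s×r}(F_q), and let e be an integer with e ≥ ω_N(y − EV_{A,1}(P)), where EV_{A,1}(P) is the s×r matrix with (i,j) entry ∂^(i−1)P(α_j). Then there exist polynomials E, N ∈ F_q[X] with deg E = e exactly, deg N ≤ e + t − 1, N = E·P, and such that for all 1 ≤ i ≤ r and 1 ≤ ℓ ≤ s, ∂^(ℓ−1)N(α_i) = Σ_{j=1}^{ℓ} y_{j,i} · ∂^(ℓ−j)E(α_i). -/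
open Polynomial

/-!
The error locator `E = X^(e - Σ m_i) ∏ (X - α_i)^(m_i)`, with `m_i` the NRT weight of column `i`
of the error `y - EV(P)`, together with `N = E P` solves the key equations. By the Leibniz rule,
`∂^ℓ N (α_i) = Σ_{j ≤ ℓ} ∂^j P (α_i) ∂^(ℓ-j) E (α_i)`, and in every term where `y_{j,i}` differs
from `∂^j P (α_i)` the order `ℓ - j` is below `s - j ≤ m_i`, so `∂^(ℓ-j) E` vanishes at the
`m_i`-fold root `α_i`.
-/

theorem Polynomial.eval_hasseDeriv_mul {R : Type*} [CommSemiring R] (f g : R[X]) (a : R)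
    (n : ℕ) :
    (hasseDeriv n (f * g)).eval a =
      ∑ k ∈ Finset.Iic n, (hasseDeriv k f).eval a * (hasseDeriv (n - k) g).eval a := by
  rw [hasseDeriv_mul, eval_finsetSum, ← Nat.range_succ_eq_Iic,
    ← Finset.Nat.sum_antidiagonal_eq_sum_range_succ fun i j =>
      (hasseDeriv i f).eval a * (hasseDeriv j g).eval a]
  simp only [eval_mul]

theorem Polynomial.eval_hasseDeriv_eq_zero_of_pow_dvd {R : Type*} [CommRing R] {a : R}
    {m k : ℕ} {f : R[X]} (h : (X - C a) ^ m ∣ f) (hk : k < m) :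
    (hasseDeriv k f).eval a = 0 := by
  obtain ⟨g, rfl⟩ := h
  have htaylor : taylor a (X - C a) = X := by simp [taylor_apply]
  rw [← taylor_coeff, taylor_mul, taylor_pow, htaylor, coeff_X_pow_mul', if_neg (by omega)]

theorem Fin.sum_Iic_eq_sum_Iic_val {M : Type*} [AddCommMonoid M] {s : ℕ} (f : ℕ → M)
    (ℓ : Fin s) : ∑ j ∈ Finset.Iic ℓ, f j = ∑ k ∈ Finset.Iic (ℓ : ℕ), f k := by
  rw [← Fin.map_valEmbedding_Iic, Finset.sum_map]
  rfl

theorem le_nrtColWt {F : Type*} [Zero F] [DecidableEq F] {s : ℕ} {col : Fin s → F} {j : Fin s}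
    (hj : col j ≠ 0) : s - j ≤ nrtColWt col :=
  Finset.le_sup (f := fun i : Fin s => s - i.val) (Finset.mem_filter.mpr ⟨Finset.mem_univ _, hj⟩)

theorem mul_eval_hasseDeriv_eq_of_pow_nrtColWt_dvd {R : Type*} [CommRing R] [DecidableEq R]
    {s : ℕ} {c d : Fin s → R} {a : R} {E : R[X]}
    (hE : (X - C a) ^ nrtColWt (fun k => c k - d k) ∣ E) {j ℓ : Fin s} (hjℓ : j ≤ ℓ) :
    c j * (hasseDeriv (ℓ - j) E).eval a = d j * (hasseDeriv (ℓ - j) E).eval a := by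
  by_cases hcd : c j = d j
  · rw [hcd]
  · have hwt : s - j ≤ nrtColWt fun k => c k - d k := le_nrtColWt (sub_ne_zero.mpr hcd)
    have hℓ : (ℓ : ℕ) < s := ℓ.isLt
    have hjℓ' : (j : ℕ) ≤ ℓ := hjℓ
    rw [eval_hasseDeriv_eq_zero_of_pow_dvd hE (by omega), mul_zero, mul_zero]

section ErrorLocator

variable {R : Type*} [CommRing R] {ι : Type*} [Fintype ι]

noncomputable def errorLocator (α : ι → R) (m : ι → ℕ) (e : ℕ) : R[X] :=
  X ^ (e - ∑ i, m i) * ∏ i, (X - C (α i)) ^ m i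

theorem natDegree_errorLocator [Nontrivial R] (α : ι → R) {m : ι → ℕ} {e : ℕ}
    (hm : ∑ i, m i ≤ e) :
    (errorLocator α m e).natDegree = e := by
  have hmonic : ∀ i ∈ Finset.univ, ((X - C (α i)) ^ m i).Monic := fun i _ =>
    (monic_X_sub_C _).pow _
  rw [errorLocator, (monic_X_pow _).natDegree_mul (monic_prod_of_monic _ _ hmonic),
    natDegree_prod_of_monic _ _ hmonic]
  simp only [natDegree_X_pow, (monic_X_sub_C _).natDegree_pow, natDegree_X_sub_C, mul_one]
  omega

theorem degree_errorLocator [Nontrivial R] (α : ι → R) {m : ι → ℕ} {e : ℕ}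
    (hm : ∑ i, m i ≤ e) :
    (errorLocator α m e).degree = e := by
  have hmonic : (errorLocator α m e).Monic :=
    (monic_X_pow _).mul (monic_prod_of_monic _ _ fun i _ => (monic_X_sub_C _).pow _)
  rw [degree_eq_natDegree hmonic.ne_zero, natDegree_errorLocator α hm]

theorem pow_dvd_errorLocator (α : ι → R) (m : ι → ℕ) (e : ℕ) (i : ι) :
    (X - C (α i)) ^ m i ∣ errorLocator α m e :=
  (Finset.dvd_prod_of_mem _ (Finset.mem_univ i)).mul_left _

end ErrorLocator

theorem welchBerlekamp_solution_exists_general {F : Type*} [Field F] [DecidableEq F]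
    {s r : ℕ} (α : Fin r → F)
    (t : ℕ)
    (P : Polynomial F) (hP : P.degree < (t : ℕ))
    (y : Matrix (Fin s) (Fin r) F) (e : ℕ)
    (he : nrtWt (y - EVmat α (Matrix.of fun _ _ => (1 : F)) P) ≤ e) :
    ∃ E N : Polynomial F,
      E.degree = (e : ℕ) ∧
      N.degree ≤ ((e + t - 1 : ℕ) : WithBot ℕ) ∧
      N = E * P ∧
      ∀ (i : Fin r) (ℓ : Fin s),
        (Polynomial.hasseDeriv ℓ.val N).eval (α i) =
          ∑ j ∈ Finset.Iic ℓ,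
            y j i * (Polynomial.hasseDeriv (ℓ.val - j.val) E).eval (α i) := by
  set Δ : Matrix (Fin s) (Fin r) F := y - EVmat α (Matrix.of fun _ _ => (1 : F)) P
  set m : Fin r → ℕ := fun i => nrtColWt fun j => Δ j i
  have hm : ∑ i, m i ≤ e := he
  refine ⟨errorLocator α m e, errorLocator α m e * P, degree_errorLocator α hm, ?_, rfl,
    fun i ℓ => ?_⟩
  · rcases eq_or_ne P 0 with rfl | hP0
    · simp
    have hPt := (natDegree_lt_iff_degree_lt hP0).mpr hP
    refine natDegree_le_iff_degree_le.mp (natDegree_mul_le.trans ?_)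
    rw [natDegree_errorLocator α hm]
    omega
  · have hcol : (fun k => Δ k i) = fun k => y k i - (hasseDeriv k P).eval (α i) := by
      ext k
      simp [Δ, EVmat]
    have hdvd := pow_dvd_errorLocator α m e i
    rw [show m i = _ from congrArg nrtColWt hcol] at hdvd
    rw [mul_comm, eval_hasseDeriv_mul, ← Fin.sum_Iic_eq_sum_Iic_val]
    exact Finset.sum_congr rfl fun j hj =>
      (mul_eval_hasseDeriv_eq_of_pow_nrtColWt_dvd hdvd (Finset.mem_Iic.mp hj)).symm

/-- **existence of a Welch–Berlekamp solution.** Let `α 1, …, α r` be distinct,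
`1 ≤ t ≤ r*s`, `P` of degree at most `t - 1`, and let `y` be a received word with
`e ≥ ω_N(y - EV_{A,1}(P))` (all-ones multiplier matrix).  Then there exist polynomials
`E, N` with `deg E = e` exactly, `deg N ≤ e + t - 1`, `N = E * P`, satisfying the
Welch–Berlekamp key equations `∂^(ℓ-1) N (α i) = ∑_{j=1}^{ℓ} y j i * ∂^(ℓ-j) E (α i)`. -/
theorem welchBerlekamp_solution_exists {F : Type*} [Field F] [Fintype F] [DecidableEq F]
    {s r : ℕ} (α : Fin r → F) (hα : Function.Injective α)
    (t : ℕ) (ht1 : 1 ≤ t) (ht2 : t ≤ r * s)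
    (P : Polynomial F) (hP : P.degree < (t : ℕ))
    (y : Matrix (Fin s) (Fin r) F) (e : ℕ)
    (he : nrtWt (y - EVmat α (Matrix.of fun _ _ => (1 : F)) P) ≤ e) :
    ∃ E N : Polynomial F,
      E.degree = (e : ℕ) ∧
      N.degree ≤ ((e + t - 1 : ℕ) : WithBot ℕ) ∧
      N = E * P ∧
      ∀ (i : Fin r) (ℓ : Fin s),
        (Polynomial.hasseDeriv ℓ.val N).eval (α i) =
          ∑ j ∈ Finset.Iic ℓ,
            y j i * (Polynomial.hasseDeriv (ℓ.val - j.val) E).eval (α i) :=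
  welchBerlekamp_solution_exists_general α t P hP y e he
end

section
/- Let F_q be a finite field, let α_1,…,α_r be distinct elements of F_q, and let y = (y_{j,i}) ∈ Mat_{s×r}(F_q). Suppose the pairs of polynomials (E_1, N_1) and (E_2, N_2) over F_q both satisfy ∂^(ℓ−1)N_k(α_i) = Σ_{j=1}^{ℓ} y_{j,i} · ∂^(ℓ−j)E_k(α_i) for all 1 ≤ i ≤ r, 1 ≤ ℓ ≤ s and k = 1, 2. Then the polynomial ∏_{i=1}^{r} (X−α_i)^s divides N_1·E_2 − N_2·E_1. -/
open Polynomial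

private lemma pow_sub_C_dvd_of_hasseDeriv_eval_eq_zero {F : Type*} [Field F] {s : ℕ} (a : F)
    (P : Polynomial F) (h : ∀ ℓ < s, (Polynomial.hasseDeriv ℓ P).eval a = 0) :
    (X - C a) ^ s ∣ P := by
  have hX : (X : Polynomial F) ^ s ∣ taylor a P := by
    rw [Polynomial.X_pow_dvd_iff]
    intro d hd
    rw [taylor_coeff]
    exact h d hd
  obtain ⟨Q, hQ⟩ := hX
  refine ⟨Q.comp (X - C a), ?_⟩
  have hP : P = (taylor a P).comp (X - C a) := by
    rw [taylor_apply, comp_assoc]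
    simp
  rw [hP, hQ, mul_comp, pow_comp, X_comp]

/-- Let `α 1, …, α r` be distinct elements of `F_q` and
`y ∈ Mat_{s×r}(F_q)`.  If the pairs `(E₁, N₁)` and `(E₂, N₂)` both satisfy the
Welch–Berlekamp key equations
`∂^(ℓ-1) N_k (α i) = ∑_{j=1}^{ℓ} y j i * ∂^(ℓ-j) E_k (α i)` for all `i, ℓ`, then
`∏ i, (X - α i)^s` divides `N₁ * E₂ - N₂ * E₁`. -/
theorem welchBerlekamp_key_divisibility {F : Type*} [Field F] [Fintype F] {s r : ℕ}
    (α : Fin r → F) (hα : Function.Injective α)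
    (y : Matrix (Fin s) (Fin r) F) (E₁ N₁ E₂ N₂ : Polynomial F)
    (h1 : ∀ (i : Fin r) (ℓ : Fin s),
      (Polynomial.hasseDeriv ℓ.val N₁).eval (α i) =
        ∑ j ∈ Finset.Iic ℓ,
          y j i * (Polynomial.hasseDeriv (ℓ.val - j.val) E₁).eval (α i))
    (h2 : ∀ (i : Fin r) (ℓ : Fin s),
      (Polynomial.hasseDeriv ℓ.val N₂).eval (α i) =
        ∑ j ∈ Finset.Iic ℓ,
          y j i * (Polynomial.hasseDeriv (ℓ.val - j.val) E₂).eval (α i)) :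
    (∏ i, (X - Polynomial.C (α i)) ^ s) ∣ (N₁ * E₂ - N₂ * E₁) := by
  apply Finset.prod_dvd_of_coprime
  · intro i _ j _ hij
    exact (Polynomial.isCoprime_X_sub_C_of_isUnit_sub
      (isUnit_iff_ne_zero.2 (sub_ne_zero.2 (fun h => hij (hα h))))).pow
  · intro i _
    apply pow_sub_C_dvd_of_hasseDeriv_eval_eq_zero
    intro ℓ hℓ
    set a := α i
    set Y : Polynomial F := ∑ j : Fin s, C (y j i) * X ^ (j : ℕ) with hY
    have hYcoeff : ∀ k (hk : k < s), Y.coeff k = y ⟨k, hk⟩ i := by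
      intro k hk
      rw [hY, Polynomial.finset_sum_coeff]
      rw [Finset.sum_eq_single (⟨k, hk⟩ : Fin s)]
      · simp
      · intro b _ hb
        rw [coeff_C_mul, coeff_X_pow, if_neg, mul_zero]
        intro h
        exact hb (Fin.ext h.symm)
      · simp
    have key : ∀ (N E : Polynomial F),
        (∀ (ℓ : Fin s), (Polynomial.hasseDeriv ℓ.val N).eval a =
          ∑ j ∈ Finset.Iic ℓ, y j i * (Polynomial.hasseDeriv (ℓ.val - j.val) E).eval a) →
        (X : Polynomial F) ^ s ∣ taylor a N - Y * taylor a E := by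
      intro N E hNE
      rw [Polynomial.X_pow_dvd_iff]
      intro d hd
      rw [coeff_sub, taylor_coeff, hNE ⟨d, hd⟩, coeff_mul,
        Finset.Nat.sum_antidiagonal_eq_sum_range_succ_mk, sub_eq_zero]
      refine Finset.sum_bij' (fun (j : Fin s) _ => (j : ℕ))
        (fun k hk => (⟨k, by simp only [Finset.mem_range] at hk; omega⟩ : Fin s)) ?_ ?_ ?_ ?_ ?_
      · intro j hj
        simp only [Finset.mem_Iic, Fin.le_def] at hj
        simp only [Finset.mem_range]
        omega
      · intro k hk
        simp only [Finset.mem_range] at hk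
        simp only [Finset.mem_Iic, Fin.le_def]
        omega
      · intro j _; rfl
      · intro k _; rfl
      · intro j hj
        simp only [Finset.mem_Iic, Fin.le_def] at hj
        rw [hYcoeff (j : ℕ) (by omega), taylor_coeff]
    have d1 := key N₁ E₁ (h1 i)
    have d2 := key N₂ E₂ (h2 i)
    have hdvd : (X : Polynomial F) ^ s ∣ taylor a (N₁ * E₂ - N₂ * E₁) := by
      have : taylor a (N₁ * E₂ - N₂ * E₁) =
          (taylor a N₁ - Y * taylor a E₁) * taylor a E₂ -
          (taylor a N₂ - Y * taylor a E₂) * taylor a E₁ := by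
        rw [map_sub, taylor_mul, taylor_mul]; ring
      rw [this]
      exact dvd_sub (d1.mul_right _) (d2.mul_right _)
    rw [← taylor_coeff]
    exact Polynomial.X_pow_dvd_iff.1 hdvd ℓ hℓ
end

section
/- Let F_q be a finite field, let α_1,…,α_r be distinct elements of F_q, let y = (y_{j,i}) ∈ Mat_{s×r}(F_q), and let e, t be nonnegative integers with 2e + t − 1 < rs. Suppose the pairs of polynomials (E_1, N_1) and (E_2, N_2) over F_q satisfy deg E_k ≤ e and deg N_k ≤ e + t − 1, and ∂^(ℓ−1)N_k(α_i) = Σ_{j=1}^{ℓ} y_{j,i} · ∂^(ℓ−j)E_k(α_i) for all 1 ≤ i ≤ r, 1 ≤ ℓ ≤ s and k = 1, 2. Then N_1·E_2 = N_2·E_1; in particular, if E_1 and E_2 are nonzero, the rational functions N_1/E_1 and N_2/E_2 coincide. -/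
/-!
In the Taylor expansion at `α i`, the key equations say `N ≡ Yᵢ E mod (X - α i)^s` with
`Yᵢ = ∑ⱼ y j i (X - α i)^j`, for both solution pairs. Eliminating `Yᵢ` gives
`(X - α i)^s ∣ N₁ E₂ - N₂ E₁` for every `i`, so the product of these coprime factors, of degree
`r s`, divides a polynomial of degree `< 2e + t ≤ r s`, which must therefore vanish.
-/

open Polynomial Finset

theorem X_sub_C_pow_dvd_iff_X_pow_dvd_taylor {R : Type*} [CommRing R] (a : R) (n : ℕ)
    (f : R[X]) : (X - C a) ^ n ∣ f ↔ X ^ n ∣ taylor a f := by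
  rw [← map_dvd_iff (taylorEquiv a), map_pow, map_sub]
  change (taylor a X - taylor a (C a)) ^ n ∣ taylor a f ↔ _
  simp [taylor_X, taylor_C]

theorem dvd_mul_sub_mul_of_dvd_sub_mul {R : Type*} [CommRing R] {d y n₁ e₁ n₂ e₂ : R}
    (h₁ : d ∣ n₁ - y * e₁) (h₂ : d ∣ n₂ - y * e₂) : d ∣ n₁ * e₂ - n₂ * e₁ := by
  have : n₁ * e₂ - n₂ * e₁ = (n₁ - y * e₁) * e₂ - (n₂ - y * e₂) * e₁ := by ring
  exact this ▸ dvd_sub (h₁.mul_right _) (h₂.mul_right _)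

theorem coeff_sum_C_mul_X_pow_mul {R : Type*} [Semiring R] {s : ℕ} (y : Fin s → R) (g : R[X])
    (ℓ : Fin s) :
    ((∑ j : Fin s, C (y j) * X ^ (j : ℕ)) * g).coeff ℓ =
      ∑ j ∈ Iic ℓ, y j * g.coeff (ℓ - j) := by
  simp only [sum_mul, finsetSum_coeff, mul_assoc, coeff_C_mul, coeff_X_pow_mul', mul_ite,
    mul_zero]
  rw [← sum_filter]
  congr 1
  simp only [Fin.val_fin_le]
  exact filter_ge_eq_Iic

theorem X_pow_dvd_taylor_sub_mul_of_hasseDeriv_eval {R : Type*} [CommRing R] {s : ℕ} (a : R)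
    (y : Fin s → R) {N E : R[X]}
    (h : ∀ ℓ : Fin s, (hasseDeriv ℓ N).eval a =
      ∑ j ∈ Iic ℓ, y j * (hasseDeriv (ℓ - j) E).eval a) :
    X ^ s ∣ taylor a N - (∑ j : Fin s, C (y j) * X ^ (j : ℕ)) * taylor a E := by
  rw [X_pow_dvd_iff]
  intro ℓ hℓ
  rw [coeff_sub, sub_eq_zero, coeff_sum_C_mul_X_pow_mul y _ ⟨ℓ, hℓ⟩, taylor_coeff, h ⟨ℓ, hℓ⟩]
  simp only [taylor_coeff]

theorem X_sub_C_pow_dvd_mul_sub_mul_of_hasseDeriv_eval {R : Type*} [CommRing R] {s : ℕ}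
    (a : R) (y : Fin s → R) {N₁ E₁ N₂ E₂ : R[X]}
    (h₁ : ∀ ℓ : Fin s, (hasseDeriv ℓ N₁).eval a =
      ∑ j ∈ Iic ℓ, y j * (hasseDeriv (ℓ - j) E₁).eval a)
    (h₂ : ∀ ℓ : Fin s, (hasseDeriv ℓ N₂).eval a =
      ∑ j ∈ Iic ℓ, y j * (hasseDeriv (ℓ - j) E₂).eval a) :
    (X - C a) ^ s ∣ N₁ * E₂ - N₂ * E₁ := by
  rw [X_sub_C_pow_dvd_iff_X_pow_dvd_taylor, map_sub, taylor_mul, taylor_mul]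
  exact dvd_mul_sub_mul_of_dvd_sub_mul
    (X_pow_dvd_taylor_sub_mul_of_hasseDeriv_eval a y h₁)
    (X_pow_dvd_taylor_sub_mul_of_hasseDeriv_eval a y h₂)

theorem eq_zero_of_forall_X_sub_C_pow_dvd {K ι : Type*} [Field K] [Fintype ι] {α : ι → K}
    (hα : Function.Injective α) {n : ℕ} {p : K[X]} (hdvd : ∀ i, (X - C (α i)) ^ n ∣ p)
    (hdeg : p.degree < (Fintype.card ι * n : ℕ)) : p = 0 := by
  by_contra hp
  have hprod : ∏ i, (X - C (α i)) ^ n ∣ p :=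
    prod_dvd_of_coprime (fun i _ j _ hij => (pairwise_coprime_X_sub_C hα hij).pow)
      fun i _ => hdvd i
  have hle := degree_le_of_dvd hprod hp
  rw [degree_prod] at hle
  simp only [degree_pow, degree_X_sub_C, nsmul_one, sum_const, card_univ] at hle
  exact hle.not_gt (by simpa [mul_comm] using hdeg)

theorem degree_mul_lt_of_lt_of_le {R : Type*} [Semiring R] {p q : R[X]} {m n : ℕ}
    (hp : p.degree < m) (hq : q.degree ≤ n) : (p * q).degree < (m + n : ℕ) := by
  rcases eq_or_ne q 0 with rfl | hq0
  · simp
  calc (p * q).degree ≤ p.degree + q.degree := degree_mul_le p q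
    _ < m + n := by
      rw [degree_eq_natDegree hq0] at hq ⊢
      exact WithBot.add_lt_add_of_lt_of_le (by simp) hp hq
    _ = (m + n : ℕ) := by norm_cast

theorem welchBerlekamp_ratio_unique_general {F : Type*} [Field F] {s r : ℕ}
    (α : Fin r → F) (hα : Function.Injective α)
    (y : Matrix (Fin s) (Fin r) F) (e t : ℕ) (het : 2 * e + t ≤ r * s)
    (E₁ N₁ E₂ N₂ : Polynomial F)
    (hE₁ : E₁.degree ≤ (e : ℕ)) (hE₂ : E₂.degree ≤ (e : ℕ))
    (hN₁ : N₁.degree < ((e + t : ℕ) : WithBot ℕ))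
    (hN₂ : N₂.degree < ((e + t : ℕ) : WithBot ℕ))
    (h1 : ∀ (i : Fin r) (ℓ : Fin s),
      (Polynomial.hasseDeriv ℓ.val N₁).eval (α i) =
        ∑ j ∈ Finset.Iic ℓ,
          y j i * (Polynomial.hasseDeriv (ℓ.val - j.val) E₁).eval (α i))
    (h2 : ∀ (i : Fin r) (ℓ : Fin s),
      (Polynomial.hasseDeriv ℓ.val N₂).eval (α i) =
        ∑ j ∈ Finset.Iic ℓ,
          y j i * (Polynomial.hasseDeriv (ℓ.val - j.val) E₂).eval (α i)) :
    N₁ * E₂ = N₂ * E₁ ∧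
      (E₁ ≠ 0 → E₂ ≠ 0 →
        (algebraMap (Polynomial F) (RatFunc F) N₁) /
            (algebraMap (Polynomial F) (RatFunc F) E₁) =
          (algebraMap (Polynomial F) (RatFunc F) N₂) /
            (algebraMap (Polynomial F) (RatFunc F) E₂)) := by
  have hdvd (i : Fin r) : (X - C (α i)) ^ s ∣ N₁ * E₂ - N₂ * E₁ :=
    X_sub_C_pow_dvd_mul_sub_mul_of_hasseDeriv_eval (α i) (fun j => y j i) (h1 i) (h2 i)
  have hdeg : (N₁ * E₂ - N₂ * E₁).degree < (Fintype.card (Fin r) * s : ℕ) := by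
    have hbound : ((e + t + e : ℕ) : WithBot ℕ) ≤ (Fintype.card (Fin r) * s : ℕ) := by
      rw [Fintype.card_fin]
      exact_mod_cast (by omega : e + t + e ≤ r * s)
    exact (degree_sub_le _ _).trans_lt <| max_lt
      ((degree_mul_lt_of_lt_of_le hN₁ hE₂).trans_le hbound)
      ((degree_mul_lt_of_lt_of_le hN₂ hE₁).trans_le hbound)
  have hcross : N₁ * E₂ = N₂ * E₁ :=
    sub_eq_zero.mp (eq_zero_of_forall_X_sub_C_pow_dvd hα hdvd hdeg)
  refine ⟨hcross, fun hE₁0 hE₂0 => ?_⟩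
  rw [div_eq_div_iff (RatFunc.algebraMap_ne_zero hE₁0) (RatFunc.algebraMap_ne_zero hE₂0),
    ← map_mul, ← map_mul, hcross]

/-- **uniqueness of the Welch–Berlekamp ratio.** Let `α 1, …, α r` be distinct,
`y ∈ Mat_{s×r}(F_q)`, and `e, t` with `2e + t - 1 < r*s` (i.e. `2e + t ≤ r*s`).  If the pairs
`(E₁, N₁)` and `(E₂, N₂)` satisfy `deg E_k ≤ e`, `deg N_k ≤ e + t - 1` (i.e.
`deg N_k < e + t`) and the Welch–Berlekamp key equations, then `N₁ * E₂ = N₂ * E₁`; in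
particular when `E₁, E₂ ≠ 0`, the rational functions `N₁ / E₁` and `N₂ / E₂` coincide. -/
theorem welchBerlekamp_ratio_unique {F : Type*} [Field F] [Fintype F] {s r : ℕ}
    (α : Fin r → F) (hα : Function.Injective α)
    (y : Matrix (Fin s) (Fin r) F) (e t : ℕ) (het : 2 * e + t ≤ r * s)
    (E₁ N₁ E₂ N₂ : Polynomial F)
    (hE₁ : E₁.degree ≤ (e : ℕ)) (hE₂ : E₂.degree ≤ (e : ℕ))
    (hN₁ : N₁.degree < ((e + t : ℕ) : WithBot ℕ))
    (hN₂ : N₂.degree < ((e + t : ℕ) : WithBot ℕ))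
    (h1 : ∀ (i : Fin r) (ℓ : Fin s),
      (Polynomial.hasseDeriv ℓ.val N₁).eval (α i) =
        ∑ j ∈ Finset.Iic ℓ,
          y j i * (Polynomial.hasseDeriv (ℓ.val - j.val) E₁).eval (α i))
    (h2 : ∀ (i : Fin r) (ℓ : Fin s),
      (Polynomial.hasseDeriv ℓ.val N₂).eval (α i) =
        ∑ j ∈ Finset.Iic ℓ,
          y j i * (Polynomial.hasseDeriv (ℓ.val - j.val) E₂).eval (α i)) :
    N₁ * E₂ = N₂ * E₁ ∧
      (E₁ ≠ 0 → E₂ ≠ 0 →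
        (algebraMap (Polynomial F) (RatFunc F) N₁) /
            (algebraMap (Polynomial F) (RatFunc F) E₁) =
          (algebraMap (Polynomial F) (RatFunc F) N₂) /
            (algebraMap (Polynomial F) (RatFunc F) E₂)) :=
  welchBerlekamp_ratio_unique_general α hα y e t het E₁ N₁ E₂ N₂ hE₁ hE₂ hN₁ hN₂ h1 h2
end

section
/- Let F_q be a finite field, let α_1,…,α_r be distinct elements of F_q, let 1 ≤ t ≤ rs, and let e be a nonnegative integer with 2e ≤ rs − t. Let P ∈ F_q[X] have degree at most t−1 and let y = (y_{j,i}) ∈ Mat_{s×r}(F_q) satisfy ω_N(y − EV_{A,1}(P)) ≤ e, where EV_{A,1}(P) is the s×r matrix with (i,j) entry ∂^(i−1)P(α_j). Then every pair of polynomials (E, N) over F_q with E ≠ 0, deg E ≤ e, deg N ≤ e + t − 1, and ∂^(ℓ−1)N(α_i) = Σ_{j=1}^{ℓ} y_{j,i} · ∂^(ℓ−j)E(α_i) for all 1 ≤ i ≤ r and 1 ≤ ℓ ≤ s, satisfies N = E·P. In particular E divides N and N/E = P, so the Welch–Berlekamp decoder recovers P from y. -/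
open Polynomial

lemma pow_X_sub_C_dvd_of_hasseDeriv {F : Type*} [CommRing F] (Q : Polynomial F) (a : F) (n : ℕ)
    (h : ∀ k < n, (Polynomial.hasseDeriv k Q).eval a = 0) : (X - C a) ^ n ∣ Q := by
  rw [Polynomial.X_sub_C_pow_dvd_iff, ← Polynomial.taylor_apply, Polynomial.X_pow_dvd_iff]
  intro d hd
  rw [Polynomial.taylor_coeff]
  exact h d hd

/-- **correctness of the Welch–Berlekamp decoder.** Let `α 1, …, α r` be
distinct, `1 ≤ t ≤ r*s`, and `e` with `2e ≤ r*s - t`.  Let `P` have degree at most `t - 1`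
and let the received word `y` satisfy `ω_N(y - EV_{A,1}(P)) ≤ e` (all-ones multiplier).
Then every pair `(E, N)` with `E ≠ 0`, `deg E ≤ e`, `deg N ≤ e + t - 1`, satisfying the
Welch–Berlekamp key equations, has `N = E * P`; in particular `E ∣ N` and `N / E = P`. -/
theorem welchBerlekamp_correct {F : Type*} [Field F] [Fintype F] [DecidableEq F]
    {s r : ℕ} (α : Fin r → F) (hα : Function.Injective α)
    (t : ℕ) (ht1 : 1 ≤ t) (ht2 : t ≤ r * s)
    (e : ℕ) (he : 2 * e ≤ r * s - t)
    (P : Polynomial F) (hP : P.degree < (t : ℕ))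
    (y : Matrix (Fin s) (Fin r) F)
    (hy : nrtWt (y - EVmat α (Matrix.of fun _ _ => (1 : F)) P) ≤ e)
    (E N : Polynomial F) (hE0 : E ≠ 0)
    (hE : E.degree ≤ (e : ℕ)) (hN : N.degree ≤ ((e + t - 1 : ℕ) : WithBot ℕ))
    (hkey : ∀ (i : Fin r) (ℓ : Fin s),
      (Polynomial.hasseDeriv ℓ.val N).eval (α i) =
        ∑ j ∈ Finset.Iic ℓ,
          y j i * (Polynomial.hasseDeriv (ℓ.val - j.val) E).eval (α i)) :
    N = E * P := by
  by_contra hne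
  set Q := N - E * P with hQdef
  have hQ0 : Q ≠ 0 := sub_ne_zero.mpr hne
  set Err := y - EVmat α (Matrix.of fun _ _ => (1 : F)) P with hErr
  set w : Fin r → ℕ := fun i => nrtColWt (fun j => Err j i) with hw
  -- each column weight is at most s, and their sum is at most e
  have hws : ∀ i, w i ≤ s := by
    intro i
    apply Finset.sup_le
    intro j _
    omega
  have hwsum : ∑ i, w i ≤ e := hy
  -- Key vanishing claim
  have hvan : ∀ (i : Fin r) (k : ℕ), k < s - w i →
      (Polynomial.hasseDeriv k Q).eval (α i) = 0 := by
    intro i k hk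
    have hks : k < s := lt_of_lt_of_le hk (Nat.sub_le _ _)
    set ℓ : Fin s := ⟨k, hks⟩ with hℓ
    -- all entries y j i with j ≤ k are correct
    have hcorrect : ∀ j : Fin s, j.val ≤ k →
        y j i = (Polynomial.hasseDeriv j.val P).eval (α i) := by
      intro j hj
      have hzero : Err j i = 0 := by
        by_contra hne'
        have : s - j.val ≤ w i :=
          Finset.le_sup (f := fun j : Fin s => s - j.val)
            (Finset.mem_filter.mpr ⟨Finset.mem_univ _, hne'⟩)
        omega
      have : y j i - (1 : F) * (Polynomial.hasseDeriv j.val P).eval (α i) = 0 := hzero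
      rw [one_mul] at this
      linear_combination this
    have hNeval : (Polynomial.hasseDeriv k N).eval (α i) =
        ∑ j ∈ Finset.Iic ℓ,
          (Polynomial.hasseDeriv j.val P).eval (α i) *
            (Polynomial.hasseDeriv (k - j.val) E).eval (α i) := by
      rw [hkey i ℓ]
      apply Finset.sum_congr rfl
      intro j hj
      have hj' : j ≤ ℓ := Finset.mem_Iic.mp hj
      rw [hcorrect j hj']
    have hIic : ∀ g : ℕ → F, ∑ j ∈ Finset.Iic ℓ, g j.val = ∑ m ∈ Finset.range (k + 1), g m := by
      intro g
      refine Finset.sum_bij' (fun j _ => j.val)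
        (fun m hm => (⟨m, lt_of_le_of_lt (Finset.mem_range_succ_iff.mp hm) hks⟩ : Fin s))
        ?_ ?_ ?_ ?_ ?_
      · intro a ha
        have ha' : a ≤ ℓ := Finset.mem_Iic.mp ha
        exact Finset.mem_range_succ_iff.mpr ha'
      · intro a ha
        refine Finset.mem_Iic.mpr ?_
        exact Fin.mk_le_mk.mpr (Finset.mem_range_succ_iff.mp ha)
      · intro a _; rfl
      · intro a _; rfl
      · intro a _; rfl
    have hEPeval : (Polynomial.hasseDeriv k (E * P)).eval (α i) =
        ∑ m ∈ Finset.range (k + 1),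
          (Polynomial.hasseDeriv m P).eval (α i) *
            (Polynomial.hasseDeriv (k - m) E).eval (α i) := by
      rw [mul_comm E P, Polynomial.hasseDeriv_mul,
        Finset.Nat.sum_antidiagonal_eq_sum_range_succ_mk]
      simp [Polynomial.eval_finset_sum]
    have hNeval' : (Polynomial.hasseDeriv k N).eval (α i) =
        ∑ m ∈ Finset.range (k + 1),
          (Polynomial.hasseDeriv m P).eval (α i) *
            (Polynomial.hasseDeriv (k - m) E).eval (α i) := by
      rw [hNeval]
      exact hIic (fun m => (Polynomial.hasseDeriv m P).eval (α i) *
        (Polynomial.hasseDeriv (k - m) E).eval (α i))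
    rw [hQdef, map_sub, Polynomial.eval_sub, hNeval', hEPeval, sub_self]
  -- divisibility by the big product
  have hdvd : (∏ i, (X - C (α i)) ^ (s - w i)) ∣ Q := by
    apply Fintype.prod_dvd_of_coprime
    · intro i j hij
      exact ((Polynomial.pairwise_coprime_X_sub_C hα hij).pow)
    · intro i
      exact pow_X_sub_C_dvd_of_hasseDeriv Q (α i) (s - w i) (hvan i)
  -- degree comparison
  have hdegprod : (∏ i, (X - C (α i)) ^ (s - w i)).natDegree = ∑ i, (s - w i) := by
    rw [Polynomial.natDegree_prod]
    · apply Finset.sum_congr rfl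
      intro i _
      rw [Polynomial.natDegree_pow, Polynomial.natDegree_X_sub_C, mul_one]
    · intro i _
      exact pow_ne_zero _ (Polynomial.X_sub_C_ne_zero (α i))
  have hle : (∏ i, (X - C (α i)) ^ (s - w i)).natDegree ≤ Q.natDegree :=
    Polynomial.natDegree_le_of_dvd hdvd hQ0
  have hsumlow : ∑ i, (s - w i) + ∑ i, w i = r * s := by
    rw [← Finset.sum_add_distrib]
    have h2 : ∀ i ∈ Finset.univ, (s - w i) + w i = s := fun i _ => by have := hws i; omega
    rw [Finset.sum_congr rfl h2]
    simp [Finset.card_univ, mul_comm]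
  -- natDegree bounds on Q
  have hNE : E.natDegree ≤ e := Polynomial.natDegree_le_iff_degree_le.mpr hE
  have hNP : P.natDegree ≤ t - 1 := by
    rcases eq_or_ne P 0 with h0 | h0
    · simp [h0]
    · have := (Polynomial.degree_eq_natDegree h0) ▸ hP
      exact_mod_cast Nat.le_sub_one_of_lt (by exact_mod_cast this)
  have hNN : N.natDegree ≤ e + t - 1 := Polynomial.natDegree_le_iff_degree_le.mpr hN
  have hEP : (E * P).natDegree ≤ e + t - 1 := by
    calc (E * P).natDegree ≤ E.natDegree + P.natDegree := Polynomial.natDegree_mul_le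
    _ ≤ e + (t - 1) := add_le_add hNE hNP
    _ ≤ e + t - 1 := by omega
  have hQdeg : Q.natDegree ≤ e + t - 1 :=
    le_trans (Polynomial.natDegree_sub_le N (E * P)) (max_le hNN hEP)
  have h2et : 2 * e + t ≤ r * s := by omega
  omega
end

section
/- Let F_q be a finite field, let α_1,…,α_r be distinct elements of F_q, let V be an s×r matrix with all entries in F_q nonzero, let 1 ≤ t ≤ rs, and let e be a nonnegative integer with 2e < rs − t + 1. If P and P′ are polynomials over F_q of degree at most t−1 and y ∈ Mat_{s×r}(F_q) satisfies both ω_N(y − EV_{A,V}(P)) ≤ e and ω_N(y − EV_{A,V}(P′)) ≤ e, then P = P′; in other words, within the unique decoding radius there is at most one HRS codeword within NRT distance e of any received word. -/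
open Polynomial

lemma hd_root_mult {F : Type*} [Field F] {f : F[X]} (hf : f ≠ 0) (a : F) (m : ℕ)
    (h : ∀ i < m, (hasseDeriv i f).eval a = 0) : m ≤ f.rootMultiplicity a := by
  rw [Polynomial.le_rootMultiplicity_iff hf]
  have hX : (X : F[X]) ^ m ∣ taylor a f := by
    rw [Polynomial.X_pow_dvd_iff]
    intro d hd
    rw [taylor_coeff]
    exact h d hd
  obtain ⟨g, hg⟩ := hX
  have : f = taylor (-a) (taylor a f) := by
    rw [taylor_taylor, neg_add_cancel, taylor_zero]
  rw [this, hg]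
  refine ⟨taylor (-a) g, ?_⟩
  simp only [taylor_apply, mul_comp, pow_comp, X_comp, C_neg]
  ring

lemma nrtColWt_le {F : Type*} [Zero F] [DecidableEq F] {s : ℕ} (col : Fin s → F) :
    nrtColWt col ≤ s :=
  Finset.sup_le fun i _ => Nat.sub_le _ _

lemma nrtColWt_add_le {F : Type*} [AddGroup F] [DecidableEq F] {s : ℕ} (a b : Fin s → F) :
    nrtColWt (a + b) ≤ nrtColWt a + nrtColWt b := by
  refine Finset.sup_le fun i hi => ?_
  rw [Finset.mem_filter] at hi
  have : a i ≠ 0 ∨ b i ≠ 0 := by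
    by_contra hc
    push_neg at hc
    exact hi.2 (by simp [hc.1, hc.2])
  rcases this with h | h
  · have h2 : s - i.val ≤ nrtColWt a :=
      Finset.le_sup (f := fun k : Fin s => s - k.val) (Finset.mem_filter.2 ⟨Finset.mem_univ i, h⟩)
    omega
  · have h2 : s - i.val ≤ nrtColWt b :=
      Finset.le_sup (f := fun k : Fin s => s - k.val) (Finset.mem_filter.2 ⟨Finset.mem_univ i, h⟩)
    omega

lemma nrtWt_add_le {F : Type*} [AddGroup F] [DecidableEq F] {s r : ℕ}
    (A B : Matrix (Fin s) (Fin r) F) : nrtWt (A + B) ≤ nrtWt A + nrtWt B := by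
  rw [nrtWt, nrtWt, nrtWt, ← Finset.sum_add_distrib]
  exact Finset.sum_le_sum fun j _ => nrtColWt_add_le _ _

/-- Key distance bound: for nonzero `f`, `nrtWt (EVmat α V f) ≥ r*s - natDegree f`. -/
lemma EVmat_wt_ge {F : Type*} [Field F] [DecidableEq F] {s r : ℕ}
    (α : Fin r → F) (hα : Function.Injective α)
    (V : Matrix (Fin s) (Fin r) F) (hV : ∀ i j, V i j ≠ 0)
    {f : F[X]} (hf : f ≠ 0) :
    r * s - f.natDegree ≤ nrtWt (EVmat α V f) := by
  set M := EVmat α V f with hM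
  -- each column's "deficiency" is at most the root multiplicity at α j
  have hmult : ∀ j, s - nrtColWt (fun i => M i j) ≤ f.rootMultiplicity (α j) := by
    intro j
    apply hd_root_mult hf
    intro i hi
    by_contra hne
    have hmem : (⟨i, lt_of_lt_of_le hi (Nat.sub_le _ _)⟩ : Fin s) ∈
        (Finset.univ.filter fun k : Fin s => M k j ≠ 0) := by
      refine Finset.mem_filter.2 ⟨Finset.mem_univ _, ?_⟩
      simp only [hM, EVmat, Matrix.of_apply]
      exact mul_ne_zero (hV _ _) hne
    have h4 : s - i ≤ nrtColWt (fun k => M k j) := Finset.le_sup (f := fun k : Fin s => s - k.val) hmem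
    omega
  -- sum of root multiplicities at distinct points is at most natDegree
  have hsum : (∑ j, f.rootMultiplicity (α j)) ≤ f.natDegree := by
    have h1 : (∑ j, f.rootMultiplicity (α j)) = ∑ a ∈ Finset.univ.image α, f.roots.count a := by
      rw [Finset.sum_image (fun x _ y _ h => hα h)]
      simp [Polynomial.count_roots]
    rw [h1]
    have h2 : ∑ a ∈ Finset.univ.image α, f.roots.count a ≤
        ∑ a ∈ Finset.univ.image α ∪ f.roots.toFinset, f.roots.count a :=
      Finset.sum_le_sum_of_subset Finset.subset_union_left
    have h3 : ∑ a ∈ Finset.univ.image α ∪ f.roots.toFinset, f.roots.count a =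
        ∑ a ∈ f.roots.toFinset, f.roots.count a := by
      refine (Finset.sum_subset Finset.subset_union_right fun x _ hx => ?_).symm
      exact Multiset.count_eq_zero.2 fun hr => hx (Multiset.mem_toFinset.2 hr)
    rw [h3] at h2
    calc _ ≤ _ := h2
      _ = Multiset.card f.roots := f.roots.toFinset_sum_count_eq
      _ ≤ f.natDegree := f.card_roots'
  have htot : (∑ j, (s - nrtColWt fun i => M i j)) ≤ f.natDegree :=
    le_trans (Finset.sum_le_sum fun j _ => hmult j) hsum
  have hsplit : (∑ j, (s - nrtColWt fun i => M i j)) + nrtWt M = r * s := by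
    rw [nrtWt, ← Finset.sum_add_distrib]
    have : ∀ j : Fin r, (s - nrtColWt fun i => M i j) + nrtColWt (fun i => M i j) = s :=
      fun j => Nat.sub_add_cancel (nrtColWt_le _)
    simp only [this, Finset.sum_const, Finset.card_univ, Fintype.card_fin, smul_eq_mul]
  omega

/-- **unique decoding radius.** Let `α 1, …, α r` be distinct, `V` a multiplier
matrix with nonzero entries, `1 ≤ t ≤ r*s`, and `e` with `2e < r*s - t + 1`.  If `P` and `P'`
have degree at most `t - 1` and a received word `y` is within NRT distance `e` of both
`EVmat α V P` and `EVmat α V P'`, then `P = P'`: within the unique decoding radius there is at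
most one HRS codeword within NRT distance `e` of any received word. -/
theorem HRS_unique_decoding {F : Type*} [Field F] [Fintype F] [DecidableEq F] {s r : ℕ}
    (α : Fin r → F) (hα : Function.Injective α)
    (V : Matrix (Fin s) (Fin r) F) (hV : ∀ i j, V i j ≠ 0)
    (t : ℕ) (ht1 : 1 ≤ t) (ht2 : t ≤ r * s)
    (e : ℕ) (he : 2 * e < r * s - t + 1)
    (P P' : Polynomial F) (hP : P.degree < (t : ℕ)) (hP' : P'.degree < (t : ℕ))
    (y : Matrix (Fin s) (Fin r) F)
    (hyP : nrtWt (y - EVmat α V P) ≤ e)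
    (hyP' : nrtWt (y - EVmat α V P') ≤ e) :
    P = P' := by
  by_contra hne
  set f := P - P' with hfdef
  have hf : f ≠ 0 := sub_ne_zero.2 hne
  have hdeg : f.natDegree < t := by
    have : f.degree < (t : ℕ) := lt_of_le_of_lt (Polynomial.degree_sub_le _ _) (max_lt hP hP')
    exact (Polynomial.natDegree_lt_iff_degree_lt hf).2 (by exact_mod_cast this)
  have hEVsub : EVmat α V P - EVmat α V P' = EVmat α V f := by
    ext i j
    simp [EVmat, hfdef, map_sub, eval_sub, mul_sub]
  have key : r * s - f.natDegree ≤ nrtWt (EVmat α V f) := EVmat_wt_ge α hα V hV hf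
  have htri : nrtWt (EVmat α V f) ≤ 2 * e := by
    have h2 : EVmat α V f = (y - EVmat α V P') - (y - EVmat α V P) := by
      rw [← hEVsub]; abel
    rw [h2, sub_eq_add_neg]
    have hneg : nrtWt (-(y - EVmat α V P)) = nrtWt (y - EVmat α V P) := by
      unfold nrtWt nrtColWt
      congr 1
      ext j
      congr 1
      ext i
      simp [sub_eq_zero, eq_comm]
    calc nrtWt ((y - EVmat α V P') + -(y - EVmat α V P))
        ≤ nrtWt (y - EVmat α V P') + nrtWt (-(y - EVmat α V P)) := nrtWt_add_le _ _
      _ = nrtWt (y - EVmat α V P') + nrtWt (y - EVmat α V P) := by rw [hneg]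
      _ ≤ e + e := add_le_add hyP' hyP
      _ = 2 * e := by ring
  omega
end
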